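/- Let P be a standard k-ribbon Fibonacci tableau with entries 1, ..., n. Then ev(P) has the same k-ribbon Fibonacci shape as P, and the tilings of P and ev(P) are related as follows: in each column of height 1 the single k-ribbon of ev(P) has the same height as the single k-ribbon of P, and in each column of height 2 the heights of the two k-ribbons are swapped — if in P that column has a k-ribbon of height j on top of a k-ribbon of height k+1−j, then in ev(P) that column has a k-ribbon of height k+1−j on top of a k-ribbon of height j. -/

import Mathlib

namespace KRF

/-- A letter of the alphabet `{1_1, …, 1_k, 2}`:  `one j` stands for the letter `1_j`
(with `1 ≤ j ≤ k` for genuine letters), and `two` stands for the letter `2`. -/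
inductive Letter (k : ℕ) : Type where
  | one : ℕ → Letter k
  | two : Letter k
deriving DecidableEq

/-- A word over the alphabet `{1_1, …, 1_k, 2}`, listed from the leftmost letter to the
rightmost letter. -/
abbrev Word (k : ℕ) := List (Letter k)

/-- The contribution of a letter to the rank: each `1_j` counts `1` and each `2` counts `2`. -/
def Letter.rank {k : ℕ} : Letter k → ℕ
  | .one _ => 1
  | .two => 2

/-- The rank of a word: the sum of its letters. -/
def Word.rank {k : ℕ} (w : Word k) : ℕ := (w.map Letter.rank).sum

/-- The letter `1_j` is valid when `1 ≤ j ≤ k`. -/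
def Letter.Valid (k : ℕ) : Letter k → Prop
  | .one j => 1 ≤ j ∧ j ≤ k
  | .two => True

/-- A genuine word of the Fibonacci poset `Z(k)`: all of its letters are valid. -/
def Word.Valid (k : ℕ) (w : Word k) : Prop := ∀ l ∈ w, l.Valid k

/-- The cover relation of the Fibonacci poset `Z(k)`:  `z` is covered by `w` iff `z` is
obtained from `w` either by changing a `2` into some `1_j` when all letters to the left of
that `2` are `2`'s, or by deleting the leftmost letter of the form `1_j`. -/
def ZCovers (k : ℕ) (z w : Word k) : Prop :=
  (∃ (p s : Word k) (j : ℕ), (∀ l ∈ p, l = Letter.two) ∧ 1 ≤ j ∧ j ≤ k ∧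
      w = p ++ Letter.two :: s ∧ z = p ++ Letter.one j :: s) ∨
  (∃ (p s : Word k) (j : ℕ), (∀ l ∈ p, l = Letter.two) ∧ 1 ≤ j ∧ j ≤ k ∧
      w = p ++ Letter.one j :: s ∧ z = p ++ s)

/-- `c 0 ⋖ c 1 ⋖ ⋯ ⋖ c n` is a saturated chain in `Z(k)` starting at the empty word. -/
def IsZChain (k n : ℕ) (c : ℕ → Word k) : Prop :=
  c 0 = [] ∧ ∀ i, i < n → ZCovers k (c i) (c (i + 1))

end KRF
namespace KRF

/-- A column of a (tiled and filled) `k`-ribbon Fibonacci tableau.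
`single h v` is a column of height 1 (shape letter `1_h`) tiled by one `k`-ribbon of
height `h` filled with the value `v`.
`double ht hb vt vb` is a column of height 2 (shape letter `2`) tiled by a `k`-ribbon of
height `ht` filled with `vt` stacked on top of a `k`-ribbon of height `hb` (always
`hb = k + 1 - ht` for genuine tableaux) filled with `vb`. -/
inductive Col (k : ℕ) : Type where
  | single : ℕ → ℕ → Col k
  | double : ℕ → ℕ → ℕ → ℕ → Col k
deriving DecidableEq

/-- A (tiled, filled) `k`-ribbon Fibonacci tableau: its list of columns, from the leftmost
column to the rightmost one. -/
abbrev Tab (k : ℕ) := List (Col k)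

/-- The shape letter of a column. -/
def Col.shape {k : ℕ} : Col k → Letter k
  | .single h _ => Letter.one h
  | .double _ _ _ _ => Letter.two

/-- The `k`-ribbon Fibonacci shape (a word) underlying a tableau. -/
def Tab.shape {k : ℕ} (T : Tab k) : Word k := T.map Col.shape

/-- The value in the bottom `k`-ribbon of a column. -/
def Col.bottomVal {k : ℕ} : Col k → ℕ
  | .single _ v => v
  | .double _ _ _ vb => vb

/-- The heights occurring in a column are genuine ribbon heights: between `1` and `k`,
and in a column of height 2 the two heights sum to `k + 1`. -/
def Col.HeightsValid (k : ℕ) : Col k → Prop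
  | .single h _ => 1 ≤ h ∧ h ≤ k
  | .double ht hb _ _ => 1 ≤ ht ∧ ht ≤ k ∧ hb = k + 1 - ht

/-- The list of all entries of a tableau (one for each `k`-ribbon). -/
def Tab.entries {k : ℕ} (T : Tab k) : List ℕ :=
  (T.map fun c => match c with
    | Col.single _ v => [v]
    | Col.double _ _ vt vb => [vt, vb]).flatten

/-- The list of the bottom-ribbon values of the columns of a tableau. -/
def Tab.bottoms {k : ℕ} (T : Tab k) : List ℕ := T.map Col.bottomVal

/-- `T` is a standard `k`-ribbon Fibonacci tableau with entries `1, …, n`: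
heights are valid, the entries are exactly `1, …, n`,  and the tableau can be built by
placing `n, n-1, …, 1` in order, each new `k`-ribbon being either appended (as a new
rightmost height-1 column) to the shape formed by the `k`-ribbons containing larger
entries, or stacked on top of a single such `k`-ribbon.  Equivalently (and this is how we
formalize it): the bottom entries strictly decrease from left to right (in particular the
`k`-ribbon containing the leftmost square of the bottom row contains `n`), and in each
column of height 2 the top entry is smaller than the bottom entry. -/
def IsStandardTab (k n : ℕ) (T : Tab k) : Prop :=
  (∀ c ∈ T, Col.HeightsValid k c) ∧
  (Tab.entries T).Perm (List.range' 1 n) ∧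
  List.Chain' (fun a b => b < a) (Tab.bottoms T) ∧
  (∀ c ∈ T, ∀ ht hb vt vb, c = Col.double ht hb vt vb → vt < vb)

/-- Updating a (partial) path tableau along one cover step `z ⋖ w` of `Z(k)`, placing the
value `i` in the `k` new squares of `w` relative to `z`:  if `w` is obtained from `z` by
inserting a letter `1_j` after the prefix of `2`'s, a new height-1 column with a single
ribbon of height `j` filled with `i` is created there; if `w` is obtained from `z` by
changing the letter `1_h` just after the prefix of `2`'s into a `2`, the `k` new squares
of that column form a `k`-ribbon of height `k + 1 - h` filled with `i`, stacked on top of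
the already present `k`-ribbon of height `h`. -/
def updateTab (k : ℕ) (i : ℕ) : Word k → Word k → Tab k → Tab k
  | Letter.two :: z', Letter.two :: w', c :: T => c :: updateTab k i z' w' T
  | Letter.one h :: _, Letter.two :: _, Col.single _ v :: T =>
      Col.double (k + 1 - h) h i v :: T
  | z, Letter.one j :: w', T => if z = w' then Col.single j i :: T else T
  | _, _, T => T

/-- The `k`-ribbon Fibonacci path tableau determined by a saturated chain in `Z(k)`:
for each `i = 1, …, n` the value `i` is placed in the `k` new squares of `c i` relative
to `c (i-1)`. -/
def chainTab (k : ℕ) (c : ℕ → Word k) : ℕ → Tab k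
  | 0 => []
  | m + 1 => updateTab k (m + 1) (c m) (c (m + 1)) (chainTab k c m)

/-- `T` is a `k`-ribbon Fibonacci path tableau with entries `1, …, n`: it is obtained
from some saturated chain `∅ = c 0 ⋖ c 1 ⋖ ⋯ ⋖ c n` in `Z(k)` by placing `i`'s in the
`k` new squares created at the `i`-th step. -/
def IsPathTab (k n : ℕ) (T : Tab k) : Prop :=
  ∃ c : ℕ → Word k, IsZChain k n c ∧ T = chainTab k c n

end KRF
namespace KRF

/-- The bubbling phase of one evacuation step.  The current column has an empty bottom
`k`-ribbon, below a `k`-ribbon of height `ht` filled with `a` (`hb` is the height of the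
empty ribbon); `rest` is the list of columns strictly to its right.  As long as there is a
ribbon above the empty one, `a` is compared with the entry `b` of the bottom ribbon of the
next column: if `a > b` the ribbon containing `a` drops to the bottom (keeping its height)
and the empty ribbon moves to the top of the column, where it is removed; if `a < b` the
empty ribbon is filled with `b` and the empty ribbon moves to the next column.  The result
is the position (index relative to the current column, height, whether it was a top
ribbon) of the finally removed empty `k`-ribbon, together with the updated suffix of the
tableau (with the empty ribbon removed and the columns slid left). -/
def evacLoop {k : ℕ} (ht hb a : ℕ) : Tab k → (ℕ × ℕ × Bool) × Tab k
  | [] => ((0, hb, true), [Col.single ht a])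
  | c :: rest =>
    if Col.bottomVal c < a then ((0, hb, true), Col.single ht a :: c :: rest)
    else
      match c with
      | Col.single h2 v => ((1, h2, false), Col.double ht hb a v :: rest)
      | Col.double ht' hb' vt' vb' =>
          let r := evacLoop ht' hb' vt' rest
          ((r.1.1 + 1, r.1.2.1, r.1.2.2), Col.double ht hb a vb' :: r.2)

/-- One evacuation step: erase the entry of the bottom `k`-ribbon of the leftmost column
(the largest entry) and bubble the empty ribbon until it can be removed.  Returns the
position (column index, height, whether it is a top ribbon) of the removed empty
`k`-ribbon together with the remaining (slid) tableau. -/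
def evacStep (k : ℕ) : Tab k → (ℕ × ℕ × Bool) × Tab k
  | [] => ((0, 0, false), [])
  | Col.single h _ :: rest => ((0, h, false), rest)
  | Col.double ht hb vt _ :: rest => evacLoop ht hb vt rest

/-- Place the value `v` in a `k`-ribbon of height `h` at the column with index `idx`:
if `isTop = false` a new height-1 column is inserted at index `idx`; if `isTop = true`
the ribbon is put on top of the (single) ribbon of the column at index `idx`. -/
def placeAt {k : ℕ} : ℕ → ℕ → Bool → ℕ → Tab k → Tab k
  | 0, h, false, v, T => Col.single h v :: T
  | 0, h, true, v, Col.single h0 vb :: rest => Col.double h h0 v vb :: rest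
  | 0, _, true, _, T => T
  | idx + 1, h, tp, v, c :: rest => c :: placeAt idx h tp v rest
  | _ + 1, _, _, _, [] => []

/-- The number of `k`-ribbons of a tableau. -/
def Tab.ribbonCount {k : ℕ} (T : Tab k) : ℕ :=
  (T.map fun c => match c with
    | Col.single _ _ => 1
    | Col.double _ _ _ _ => 2).sum

/-- The evacuation recursion: each step removes the largest remaining entry, bubbles the
empty ribbon to its final position, and records that entry at that position in the
evacuation tableau (which has the same shape as the original tableau).  Each step removes
exactly one `k`-ribbon, so `Tab.ribbonCount T` steps suffice. -/
def evacAux (k : ℕ) : ℕ → Tab k → Tab k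
  | 0, _ => []
  | _ + 1, [] => []
  | fuel + 1, c :: rest =>
      let s := evacStep k (c :: rest)
      placeAt s.1.1 s.1.2.1 s.1.2.2 (Col.bottomVal c) (evacAux k fuel s.2)

/-- The evacuation `ev(P)` of a (standard) `k`-ribbon Fibonacci tableau. -/
def evac (k : ℕ) (T : Tab k) : Tab k := evacAux k (Tab.ribbonCount T) T

end KRF

namespace KRF

/-! In an evacuation step whose first column has a ribbon of height `ht` above the erased ribbon
of height `hb`, the comparisons only decide where the empty ribbon stops: on top of a column, or
as a whole one-ribbon column. In every case, filling that position in a tableau tiled like the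
remainder with heights swapped gives the swapped tiling of the original, the first column
becoming `hb` above `ht` (an induction along the columns the empty ribbon passes). Since each
step removes one ribbon, induction on the number of ribbons shows that `ev(P)` is tiled like `P`
with the heights in every column of height 2 swapped. -/

section

variable {k : ℕ}

def Col.tiling : Col k → ℕ ⊕ (ℕ × ℕ)
  | .single h _ => .inl h
  | .double ht hb _ _ => .inr (ht, hb)

def Col.swappedTiling : Col k → ℕ ⊕ (ℕ × ℕ)
  | .single h _ => .inl h
  | .double ht hb _ _ => .inr (hb, ht)

def tilingShape : ℕ ⊕ (ℕ × ℕ) → Letter k := Sum.elim Letter.one fun _ => Letter.two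

theorem Col.tilingShape_tiling (c : Col k) : tilingShape c.tiling = c.shape := by
  cases c <;> rfl

theorem Col.tilingShape_swappedTiling (c : Col k) : tilingShape c.swappedTiling = c.shape := by
  cases c <;> rfl

theorem Col.tiling_eq_inl_iff {c : Col k} {h : ℕ} :
    c.tiling = .inl h ↔ ∃ v, c = .single h v := by
  cases c <;> simp [Col.tiling]

theorem Col.tiling_eq_inr_iff {c : Col k} {ht hb : ℕ} :
    c.tiling = .inr (ht, hb) ↔ ∃ vt vb, c = .double ht hb vt vb := by
  cases c <;> simp [Col.tiling]

theorem Tab.ribbonCount_cons_single (h v : ℕ) (T : Tab k) :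
    Tab.ribbonCount (.single h v :: T) = Tab.ribbonCount T + 1 := by
  simp [Tab.ribbonCount, add_comm]

theorem Tab.ribbonCount_cons_double (ht hb vt vb : ℕ) (T : Tab k) :
    Tab.ribbonCount (.double ht hb vt vb :: T) = Tab.ribbonCount T + 2 := by
  simp [Tab.ribbonCount, add_comm]

theorem ribbonCount_evacLoop (ht hb a : ℕ) (rest : Tab k) :
    Tab.ribbonCount (evacLoop ht hb a rest).2 = Tab.ribbonCount rest + 1 := by
  induction rest generalizing ht hb a with
  | nil => rfl
  | cons c rest ih =>
    by_cases hlt : c.bottomVal < a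
    · simp only [evacLoop, if_pos hlt, Tab.ribbonCount_cons_single]
    · cases c with
      | single h v =>
        simp only [evacLoop, if_neg hlt, Tab.ribbonCount_cons_single, Tab.ribbonCount_cons_double]
      | double ht' hb' vt' vb' =>
        simp only [evacLoop, if_neg hlt, Tab.ribbonCount_cons_double, ih]

theorem tiling_placeAt_evacLoop (ht hb a w : ℕ) (rest U : Tab k)
    (hU : U.map Col.tiling = (evacLoop ht hb a rest).2.map Col.swappedTiling) :
    (placeAt (evacLoop ht hb a rest).1.1 (evacLoop ht hb a rest).1.2.1
        (evacLoop ht hb a rest).1.2.2 w U).map Col.tiling =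
      .inr (hb, ht) :: rest.map Col.swappedTiling := by
  induction rest generalizing ht hb a U with
  | nil =>
    simp only [evacLoop, List.map_cons, List.map_nil, Col.swappedTiling] at hU ⊢
    obtain ⟨d, U', rfl, hd, hU'⟩ := List.map_eq_cons_iff.mp hU
    obtain ⟨v, rfl⟩ := Col.tiling_eq_inl_iff.mp hd
    obtain rfl := List.map_eq_nil_iff.mp hU'
    simp [placeAt, Col.tiling]
  | cons c rest ih =>
    by_cases hlt : c.bottomVal < a
    · simp only [evacLoop, if_pos hlt, List.map_cons, Col.swappedTiling] at hU ⊢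
      obtain ⟨d, U', rfl, hd, hU'⟩ := List.map_eq_cons_iff.mp hU
      obtain ⟨v, rfl⟩ := Col.tiling_eq_inl_iff.mp hd
      simp [placeAt, Col.tiling, hU']
    · cases c with
      | single h v =>
        simp only [evacLoop, if_neg hlt, List.map_cons, Col.swappedTiling] at hU ⊢
        obtain ⟨d, U', rfl, hd, hU'⟩ := List.map_eq_cons_iff.mp hU
        obtain ⟨vt, vb, rfl⟩ := Col.tiling_eq_inr_iff.mp hd
        simp [placeAt, Col.tiling, hU']
      | double ht' hb' vt' vb' =>
        simp only [evacLoop, if_neg hlt, List.map_cons, Col.swappedTiling] at hU ⊢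
        obtain ⟨d, U', rfl, hd, hU'⟩ := List.map_eq_cons_iff.mp hU
        obtain ⟨vt, vb, rfl⟩ := Col.tiling_eq_inr_iff.mp hd
        simp [placeAt, Col.tiling, ih _ _ _ _ hU']

theorem tiling_evacAux (m : ℕ) (T : Tab k) (hm : T.ribbonCount = m) :
    (evacAux k m T).map Col.tiling = T.map Col.swappedTiling := by
  induction m generalizing T with
  | zero =>
    cases T with
    | nil => rfl
    | cons c T => cases c <;> simp [Tab.ribbonCount_cons_single, Tab.ribbonCount_cons_double] at hm
  | succ m ih =>
    cases T with
    | nil => rfl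
    | cons c rest =>
      cases c with
      | single h v =>
        rw [Tab.ribbonCount_cons_single, Nat.add_right_cancel_iff] at hm
        simp [evacAux, evacStep, placeAt, Col.tiling, Col.swappedTiling, ih rest hm]
      | double ht hb vt vb =>
        rw [Tab.ribbonCount_cons_double] at hm
        have hloop : (evacLoop ht hb vt rest).2.ribbonCount = m := by
          rw [ribbonCount_evacLoop]; omega
        exact tiling_placeAt_evacLoop ht hb vt vb rest _ (ih _ hloop)

theorem tiling_evac (T : Tab k) : (evac k T).map Col.tiling = T.map Col.swappedTiling :=
  tiling_evacAux _ T rfl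

theorem shape_evac (T : Tab k) : Tab.shape (evac k T) = Tab.shape T := by
  simpa only [Tab.shape, List.map_map, Function.comp_def, Col.tilingShape_tiling,
    Col.tilingShape_swappedTiling] using congrArg (List.map (tilingShape (k := k))) (tiling_evac T)

theorem length_evac (T : Tab k) : (evac k T).length = T.length := by
  simpa only [List.length_map] using congrArg List.length (tiling_evac T)

theorem getElem?_evac_map_tiling (T : Tab k) (i : ℕ) :
    (evac k T)[i]?.map Col.tiling = T[i]?.map Col.swappedTiling := by
  simpa only [List.getElem?_map] using
    congrArg (fun L : List (ℕ ⊕ (ℕ × ℕ)) => L[i]?) (tiling_evac T)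

end

theorem evac_shape_and_tiling_general (k : ℕ) (T : Tab k) :
    Tab.shape (evac k T) = Tab.shape T ∧
    (evac k T).length = T.length ∧
    (∀ (i : ℕ) (h v : ℕ), T[i]? = some (Col.single h v) →
      ∃ v', (evac k T)[i]? = some (Col.single h v')) ∧
    (∀ (i : ℕ) (ht hb vt vb : ℕ), T[i]? = some (Col.double ht hb vt vb) →
      ∃ vt' vb', (evac k T)[i]? = some (Col.double hb ht vt' vb')) := by
  refine ⟨shape_evac T, length_evac T, ?_, ?_⟩
  · intro i h v hi
    have : (evac k T)[i]?.map Col.tiling = some (.inl h) := by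
      rw [getElem?_evac_map_tiling, hi]; rfl
    obtain ⟨c, hc, hct⟩ := Option.map_eq_some_iff.mp this
    obtain ⟨v', rfl⟩ := Col.tiling_eq_inl_iff.mp hct
    exact ⟨v', hc⟩
  · intro i ht hb vt vb hi
    have : (evac k T)[i]?.map Col.tiling = some (.inr (hb, ht)) := by
      rw [getElem?_evac_map_tiling, hi]; rfl
    obtain ⟨c, hc, hct⟩ := Option.map_eq_some_iff.mp this
    obtain ⟨vt', vb', rfl⟩ := Col.tiling_eq_inr_iff.mp hct
    exact ⟨vt', vb', hc⟩

/-- Let `P` be a standard `k`-ribbon Fibonacci tableau with entries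
`1, …, n`.  Then `ev(P)` has the same `k`-ribbon Fibonacci shape as `P`, and the tilings
of `P` and `ev(P)` are related as follows: in each column of height 1 the single
`k`-ribbon of `ev(P)` has the same height as the single `k`-ribbon of `P`, and in each
column of height 2 the heights of the two `k`-ribbons are swapped — if in `P` the column
has a `k`-ribbon of height `j` on top of a `k`-ribbon of height `k + 1 − j`, then in
`ev(P)` it has a `k`-ribbon of height `k + 1 − j` on top of a `k`-ribbon of height `j`. -/
theorem evac_shape_and_tiling (k n : ℕ) (hk : 1 ≤ k) (T : Tab k)
    (hT : IsStandardTab k n T) :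
    Tab.shape (evac k T) = Tab.shape T ∧
    (evac k T).length = T.length ∧
    (∀ (i : ℕ) (h v : ℕ), T[i]? = some (Col.single h v) →
      ∃ v', (evac k T)[i]? = some (Col.single h v')) ∧
    (∀ (i : ℕ) (ht hb vt vb : ℕ), T[i]? = some (Col.double ht hb vt vb) →
      ∃ vt' vb', (evac k T)[i]? = some (Col.double hb ht vt' vb')) :=
  evac_shape_and_tiling_general k T

end KRF
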